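/- arXiv:1204.3701 — 5 statements merged into one kernel-verified Lean document; each statement's English description precedes it below -/
import Mathlib

section
/- For every integer n ≥ 0, the function Symm's operator applied to cos(nθ), namely S₀[cos(n·)](θ) = -(1/(2π)) ∫₀^π ln|cos θ - cos θ'| cos(n θ') dθ', equals λ_n cos(nθ), where λ₀ = (ln 2)/2 and λ_n = 1/(2n) for n ≥ 1. -/
/-!
For `|r| < 1` the Taylor series of `log (1 - z)` gives `log ‖1 - r e^{ix}‖ = -∑ₖ rᵏ cos (k x) / k`,
and `cos (k (t + θ)) + cos (k (t - θ)) = 2 cos (k θ) cos (k t)`, so integrating against `cos (n t)`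
over `[0, π]` term by term, orthogonality leaves only `-π rⁿ cos (n θ) / n`. At `r = 1` the two
factors multiply to `‖1 - e^{i(t+θ)}‖ ‖1 - e^{i(t-θ)}‖ = 2 |cos θ - cos t|`, and for `|r| ≤ 1` the
logarithms are dominated by the integrable `log 2 + |log |sin (t ± θ)||`, so letting `r → 1⁻`
gives `∫₀^π (log 2 + log |cos θ - cos t|) cos (n t) dt = -π cos (n θ) / n`.
-/

open Real MeasureTheory Filter Topology

theorem integral_cos_int_mul_zero_pi (k : ℤ) :
    ∫ t in (0:ℝ)..π, cos (k * t) = if k = 0 then π else 0 := by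
  split_ifs with hk
  · simp [hk]
  · have hk' : (k : ℝ) ≠ 0 := Int.cast_ne_zero.mpr hk
    rw [intervalIntegral.integral_comp_mul_left (fun t => cos t) hk', integral_cos, sin_int_mul_pi]
    simp

theorem integral_cos_nat_mul_mul_cos_nat_mul_zero_pi (j m : ℕ) :
    ∫ t in (0:ℝ)..π, cos (j * t) * cos (m * t)
      = if j = m then (if j = 0 then π else π / 2) else 0 := by
  have h : (fun t : ℝ => cos (j * t) * cos (m * t))
      = fun t => (cos (((j + m : ℤ) : ℝ) * t) + cos (((j - m : ℤ) : ℝ) * t)) / 2 := by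
    ext t
    push_cast
    rw [add_mul, sub_mul, cos_add, cos_sub]
    ring
  have hint : ∀ k : ℤ, IntervalIntegrable (fun t => cos (k * t)) volume 0 π :=
    fun k => by apply Continuous.intervalIntegrable; fun_prop
  rw [h, intervalIntegral.integral_div, intervalIntegral.integral_add (hint _) (hint _),
    integral_cos_int_mul_zero_pi, integral_cos_int_mul_zero_pi]
  have hsum : (j + m : ℤ) = 0 ↔ j = 0 ∧ m = 0 := by omega
  have hdiff : (j - m : ℤ) = 0 ↔ j = m := by omega
  simp only [hsum, hdiff]
  split_ifs <;> first | omega | ring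

theorem abs_pow_div_natCast_le (r : ℝ) (k : ℕ) : |r ^ k / k| ≤ |r| ^ k := by
  rcases Nat.eq_zero_or_pos k with rfl | hk
  · simp
  · rw [abs_div, abs_pow, Nat.abs_cast]
    exact div_le_self (by positivity) (by exact_mod_cast hk)

theorem ae_sin_add_ne_zero (c : ℝ) : ∀ᵐ t : ℝ, sin (t + c) ≠ 0 :=
  ((Set.countable_range fun k : ℤ => k * π - c).ae_notMem volume).mono fun t ht h =>
    ht <| by
      obtain ⟨k, hk⟩ := sin_eq_zero_iff.mp h
      exact ⟨k, by linarith⟩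

theorem intervalIntegrable_log_abs_of_analyticAt {f : ℝ → ℝ} (hf : ∀ x, AnalyticAt ℝ f x)
    (a b : ℝ) : IntervalIntegrable (fun t => log |f t|) volume a b :=
  MeromorphicOn.intervalIntegrable_log_norm fun x _ => (hf x).meromorphicAt

noncomputable def logNormOneSubExp (r x : ℝ) : ℝ := log ‖1 - r * Complex.exp (x * Complex.I)‖

theorem hasSum_logNormOneSubExp {r : ℝ} (hr : |r| < 1) (x : ℝ) :
    HasSum (fun k : ℕ => r ^ k / k * cos (k * x)) (-logNormOneSubExp r x) := by
  have hz : ‖(r : ℂ) * Complex.exp (x * Complex.I)‖ < 1 := by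
    simpa [Complex.norm_exp_ofReal_mul_I] using hr
  convert Complex.hasSum_re (Complex.hasSum_taylorSeries_neg_log hz) using 1
  · ext k
    rw [mul_pow, ← Complex.exp_nat_mul, ← Complex.ofReal_pow, ← Complex.ofReal_natCast,
      mul_div_right_comm, ← Complex.ofReal_div, ← mul_assoc, ← Complex.ofReal_mul,
      Complex.re_ofReal_mul, Complex.exp_ofReal_mul_I_re]
  · simp [logNormOneSubExp, Complex.log_re]

theorem sq_norm_one_sub_mul_exp (r x : ℝ) :
    ‖1 - r * Complex.exp (x * Complex.I)‖ ^ 2 = (r - cos x) ^ 2 + sin x ^ 2 := by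
  rw [Complex.sq_norm, Complex.normSq_apply]
  simp only [Complex.sub_re, Complex.sub_im, Complex.one_re, Complex.one_im,
    Complex.re_ofReal_mul, Complex.im_ofReal_mul, Complex.exp_ofReal_mul_I_re,
    Complex.exp_ofReal_mul_I_im]
  linear_combination (r ^ 2 - 1) * sin_sq_add_cos_sq x

theorem abs_sin_le_norm_one_sub_mul_exp (r x : ℝ) :
    |sin x| ≤ ‖1 - r * Complex.exp (x * Complex.I)‖ :=
  (sq_le_sq₀ (abs_nonneg _) (norm_nonneg _)).mp <| by
    rw [sq_abs, sq_norm_one_sub_mul_exp]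
    exact le_add_of_nonneg_left (sq_nonneg _)

theorem norm_one_sub_mul_exp_le (r x : ℝ) :
    ‖1 - r * Complex.exp (x * Complex.I)‖ ≤ 1 + |r| := by
  simpa [Complex.norm_exp_ofReal_mul_I] using norm_sub_le (1 : ℂ) (r * Complex.exp (x * Complex.I))

theorem abs_logNormOneSubExp_le {r x : ℝ} (hr : |r| ≤ 1) (hx : sin x ≠ 0) :
    |logNormOneSubExp r x| ≤ log 2 + |log (|sin x|)| := by
  have hsin : 0 < |sin x| := abs_pos.mpr hx
  have hlow := abs_sin_le_norm_one_sub_mul_exp r x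
  have hup : ‖1 - r * Complex.exp (x * Complex.I)‖ ≤ 2 := by
    linarith [norm_one_sub_mul_exp_le r x]
  have h₁ : logNormOneSubExp r x ≤ log 2 := log_le_log (hsin.trans_le hlow) hup
  have h₂ : log |sin x| ≤ logNormOneSubExp r x := log_le_log hsin hlow
  have h₃ : 0 ≤ log 2 := log_nonneg one_le_two
  rw [abs_le]
  constructor <;> linarith [neg_abs_le (log |sin x|), le_abs_self (log |sin x|)]

theorem norm_one_sub_mul_exp_ne_zero (r : ℝ) {x : ℝ} (hx : sin x ≠ 0) :
    ‖1 - r * Complex.exp (x * Complex.I)‖ ≠ 0 :=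
  ((abs_pos.mpr hx).trans_le (abs_sin_le_norm_one_sub_mul_exp r x)).ne'

theorem continuous_logNormOneSubExp {x : ℝ} (hx : sin x ≠ 0) :
    Continuous fun r => logNormOneSubExp r x :=
  Continuous.log (by fun_prop) fun r => norm_one_sub_mul_exp_ne_zero r hx

@[fun_prop]
theorem measurable_logNormOneSubExp (r : ℝ) : Measurable (logNormOneSubExp r) :=
  measurable_log.comp
    (by fun_prop : Continuous fun x : ℝ => ‖1 - r * Complex.exp (x * Complex.I)‖).measurable

theorem norm_one_sub_exp_add_mul_norm_one_sub_exp_sub (t θ : ℝ) :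
    ‖1 - Complex.exp ((t + θ : ℝ) * Complex.I)‖ * ‖1 - Complex.exp ((t - θ : ℝ) * Complex.I)‖
      = 2 * |cos θ - cos t| := by
  have hsq : ∀ x : ℝ, ‖1 - Complex.exp (x * Complex.I)‖ ^ 2 = 2 - 2 * cos x := fun x => by
    have h := sq_norm_one_sub_mul_exp 1 x
    rw [Complex.ofReal_one, one_mul] at h
    rw [h]
    linear_combination sin_sq_add_cos_sq x
  rw [← abs_of_nonneg (by positivity : (0:ℝ) ≤ 2), ← abs_mul,
    ← sq_eq_sq₀ (by positivity) (abs_nonneg _), mul_pow, hsq, hsq, sq_abs, cos_add, cos_sub]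
  linear_combination
    (-4 * sin θ ^ 2) * sin_sq_add_cos_sq t + (-4 * (1 - cos t ^ 2)) * sin_sq_add_cos_sq θ

theorem logNormOneSubExp_one_add_sub {t θ : ℝ} (h₁ : sin (t + θ) ≠ 0) (h₂ : sin (t - θ) ≠ 0) :
    logNormOneSubExp 1 (t + θ) + logNormOneSubExp 1 (t - θ) = log 2 + log |cos θ - cos t| := by
  have hA := norm_one_sub_mul_exp_ne_zero 1 h₁
  have hB := norm_one_sub_mul_exp_ne_zero 1 h₂
  simp only [Complex.ofReal_one, one_mul] at hA hB
  have hprod := norm_one_sub_exp_add_mul_norm_one_sub_exp_sub t θ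
  have hcos : |cos θ - cos t| ≠ 0 := by
    intro h; rw [h, mul_zero] at hprod; exact mul_ne_zero hA hB hprod
  simp only [logNormOneSubExp, Complex.ofReal_one, one_mul]
  rw [← log_mul hA hB, hprod, log_mul two_ne_zero hcos]

-- At `n = 0` the right-hand side is `0` through `x / 0 = 0`, as is the `k = 0` term of the series.
theorem integral_logNormOneSubExp_add_sub_mul_cos {r : ℝ} (hr : |r| < 1) (n : ℕ) (θ : ℝ) :
    ∫ t in (0:ℝ)..π, (logNormOneSubExp r (t + θ) + logNormOneSubExp r (t - θ)) * cos (n * t)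
      = -(π * r ^ n * cos (n * θ) / n) := by
  set F : ℕ → ℝ → ℝ := fun k t => 2 * (r ^ k / k) * cos (k * θ) * (cos (k * t) * cos (n * t))
  have hF : ∀ t, HasSum (fun k => F k t)
      (-(logNormOneSubExp r (t + θ) + logNormOneSubExp r (t - θ)) * cos (n * t)) := fun t => by
    have hterm : (fun k => F k t) = fun k : ℕ =>
        (r ^ k / k * cos (k * (t + θ)) + r ^ k / k * cos (k * (t - θ))) * cos (n * t) := by
      ext k
      rw [mul_add, mul_sub, cos_add, cos_sub]
      ring
    rw [hterm, neg_add]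
    exact ((hasSum_logNormOneSubExp hr _).add (hasSum_logNormOneSubExp hr _)).mul_right _
  have hF_int : ∀ k, ∫ t in (0:ℝ)..π, F k t = if k = n then π * r ^ n * cos (n * θ) / n else 0 := by
    intro k
    rw [intervalIntegral.integral_const_mul, integral_cos_nat_mul_mul_cos_nat_mul_zero_pi]
    rcases eq_or_ne k n with rfl | hkn
    · rcases eq_or_ne k 0 with rfl | hk0
      · simp
      · simp only [if_true, if_neg hk0]
        ring
    · simp [hkn]
  have hF_le : ∀ k t, ‖F k t‖ ≤ 2 * |r| ^ k := fun k t => by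
    simp only [F, norm_mul, Real.norm_eq_abs, abs_two]
    calc 2 * |r ^ k / k| * |cos (k * θ)| * (|cos (k * t)| * |cos (n * t)|)
        ≤ 2 * |r| ^ k * 1 * (1 * 1) := by
          gcongr
          exacts [abs_pow_div_natCast_le r k, abs_cos_le_one _, abs_cos_le_one _, abs_cos_le_one _]
      _ = 2 * |r| ^ k := by ring
  have hsum := intervalIntegral.hasSum_integral_of_dominated_convergence
    (μ := volume) (a := 0) (b := π)
    (fun k _ => 2 * |r| ^ k) (fun k => (by fun_prop : Continuous (F k)).aestronglyMeasurable)
    (fun k => ae_of_all _ fun t _ => hF_le k t)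
    (ae_of_all _ fun t _ => (summable_geometric_of_lt_one (abs_nonneg r) hr).mul_left 2)
    intervalIntegrable_const (ae_of_all _ fun t _ => hF t)
  rw [funext hF_int] at hsum
  simp only [neg_mul, intervalIntegral.integral_neg] at hsum
  linarith [(hasSum_ite_eq n _).unique hsum]

theorem tendsto_integral_logNormOneSubExp_add_sub_mul_cos (n : ℕ) (θ : ℝ) :
    Tendsto (fun r => ∫ t in (0:ℝ)..π,
        (logNormOneSubExp r (t + θ) + logNormOneSubExp r (t - θ)) * cos (n * t)) (𝓝[<] 1)
      (𝓝 (∫ t in (0:ℝ)..π, (log 2 + log |cos θ - cos t|) * cos (n * t))) := by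
  have hae : ∀ᵐ t : ℝ, sin (t + θ) ≠ 0 ∧ sin (t - θ) ≠ 0 := by
    filter_upwards [ae_sin_add_ne_zero θ, ae_sin_add_ne_zero (-θ)] with t h₁ h₂
    exact ⟨h₁, by rwa [sub_eq_add_neg]⟩
  refine intervalIntegral.tendsto_integral_filter_of_dominated_convergence
    (fun t => (log 2 + |log (|sin (t + θ)|)|) + (log 2 + |log (|sin (t - θ)|)|))
    (Eventually.of_forall fun r => (by fun_prop : Measurable _).aestronglyMeasurable) ?_ ?_ ?_
  · filter_upwards [Ioo_mem_nhdsLT (show (-1 : ℝ) < 1 by norm_num)] with r hr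
    filter_upwards [hae] with t ⟨h₁, h₂⟩ _
    have hr' : |r| ≤ 1 := abs_le.mpr ⟨hr.1.le, hr.2.le⟩
    rw [norm_mul, Real.norm_eq_abs]
    calc |logNormOneSubExp r (t + θ) + logNormOneSubExp r (t - θ)| * ‖cos (n * t)‖
        ≤ (|logNormOneSubExp r (t + θ)| + |logNormOneSubExp r (t - θ)|) * 1 := by
          gcongr
          exacts [abs_add_le _ _, abs_cos_le_one _]
      _ ≤ _ := by
          linarith [abs_logNormOneSubExp_le hr' h₁, abs_logNormOneSubExp_le hr' h₂]
  · have hsin : ∀ c, IntervalIntegrable (fun t => |log (|sin (t + c)|)|) volume 0 π := fun c =>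
      (intervalIntegrable_log_abs_of_analyticAt (fun x => by fun_prop) 0 π).abs
    simp only [sub_eq_add_neg]
    exact (intervalIntegrable_const.add (hsin θ)).add (intervalIntegrable_const.add (hsin (-θ)))
  · filter_upwards [hae] with t ⟨h₁, h₂⟩ _
    rw [← logNormOneSubExp_one_add_sub h₁ h₂]
    exact (((continuous_logNormOneSubExp h₁).add (continuous_logNormOneSubExp h₂)).mul
      continuous_const).continuousAt.tendsto.mono_left nhdsWithin_le_nhds

theorem integral_log_two_add_log_abs_cos_sub_mul_cos (n : ℕ) (θ : ℝ) :
    ∫ t in (0:ℝ)..π, (log 2 + log |cos θ - cos t|) * cos (n * t) = -(π * cos (n * θ) / n) := by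
  refine tendsto_nhds_unique (tendsto_integral_logNormOneSubExp_add_sub_mul_cos n θ) ?_
  have hlim : Tendsto (fun r : ℝ => -(π * r ^ n * cos (n * θ) / n)) (𝓝[<] 1)
      (𝓝 (-(π * cos (n * θ) / n))) := by
    simpa using ((continuous_pow n).tendsto 1).mono_left nhdsWithin_le_nhds
      |>.const_mul π |>.mul_const (cos (n * θ)) |>.div_const (n : ℝ) |>.neg
  refine hlim.congr' ?_
  filter_upwards [Ioo_mem_nhdsLT (show (-1 : ℝ) < 1 by norm_num)] with r hr
  exact (integral_logNormOneSubExp_add_sub_mul_cos (abs_lt.mpr hr) n θ).symm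

theorem symm_operator_diagonal_general (n : ℕ) (θ : ℝ) :
    -(1 / (2 * Real.pi)) *
        ∫ θ' in (0:ℝ)..Real.pi, Real.log |Real.cos θ - Real.cos θ'| * Real.cos (n * θ')
      = (if n = 0 then Real.log 2 / 2 else 1 / (2 * n)) * Real.cos (n * θ) := by
  have hlog : IntervalIntegrable (fun t => log |cos θ - cos t| * cos (n * t)) volume 0 π :=
    (intervalIntegrable_log_abs_of_analyticAt (fun x => by fun_prop) 0 π).mul_continuousOn
      (by fun_prop)
  have hcos : ∫ t in (0:ℝ)..π, cos (n * t) = if n = 0 then π else 0 := by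
    simpa using integral_cos_int_mul_zero_pi n
  have key := integral_log_two_add_log_abs_cos_sub_mul_cos n θ
  simp only [add_mul] at key
  rw [intervalIntegral.integral_add ((by fun_prop : Continuous _).intervalIntegrable 0 π) hlog,
    intervalIntegral.integral_const_mul, hcos] at key
  rcases eq_or_ne n 0 with rfl | hn
  · simp only [if_true, CharP.cast_eq_zero, zero_mul, cos_zero, mul_one, div_zero, neg_zero]
      at key ⊢
    field_simp
    linarith
  · simp only [if_neg hn, mul_zero, zero_add] at key ⊢
    rw [key]
    field_simp

/-- Symm's operator diagonalizes the cosine basis: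
`S₀[cos(n·)](θ) = λ_n cos(nθ)` with `λ₀ = (ln 2)/2`, `λ_n = 1/(2n)` for `n ≥ 1`. -/
theorem symm_operator_diagonal (n : ℕ) (θ : ℝ) (hθ : θ ∈ Set.Ioo 0 Real.pi) :
    -(1 / (2 * Real.pi)) *
        ∫ θ' in (0:ℝ)..Real.pi, Real.log |Real.cos θ - Real.cos θ'| * Real.cos (n * θ')
      = (if n = 0 then Real.log 2 / 2 else 1 / (2 * n)) * Real.cos (n * θ) :=
  symm_operator_diagonal_general n θ
end

section
/- For every n ≥ 1 and θ ∈ (0, π): if n = 2p then -cos θ · sin(nθ)/(4n sin θ) - cos(nθ)/4 = λ_n cos(nθ) - (1/(2n)) Σ_{k=0}^{p-1} (1 - δ_{0k}/2) cos(2kθ), and if n = 2p+1 then it equals λ_n cos(nθ) - (1/(2n)) Σ_{k=0}^{p-1} cos((2k+1)θ), where λ_n = -1/4 - 1/(4n). -/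
/-!
Since `cos θ sin nθ = sin θ cos nθ + sin((n-1)θ)`, the left-hand side equals
`λ_n cos nθ - sin((n-1)θ) / (4n sin θ)`, so everything reduces to the Dirichlet-kernel type
expansion of `sin((n-1)θ) / (2 sin θ)` as a sum of cosines of the same parity as `n - 1`.
That expansion telescopes through `2 sin θ cos x = sin(x + θ) - sin(x - θ)`; in the even case
the boundary term `-sin(-θ)` is what the half weight on `k = 0` cancels.
-/

open Real Finset

theorem two_mul_sin_mul_sum_range_cos (θ c : ℝ) (p : ℕ) :
    2 * sin θ * ∑ k ∈ range p, cos ((2 * k + c) * θ)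
      = sin ((2 * p + c - 1) * θ) - sin ((c - 1) * θ) := by
  have hprod : ∀ x, 2 * sin θ * cos x = sin (x + θ) - sin (x - θ) := fun x => by
    rw [two_mul_sin_mul_cos, ← neg_sub, sin_neg, add_comm x]
    ring
  have step : ∀ k : ℕ, 2 * sin θ * cos ((2 * k + c) * θ)
      = sin ((2 * ((k + 1 : ℕ) : ℝ) + c - 1) * θ) - sin ((2 * (k : ℝ) + c - 1) * θ) := by
    intro k
    rw [hprod]
    push_cast
    ring_nf
  rw [mul_sum, sum_congr rfl fun k _ => step k,
    sum_range_sub (fun k : ℕ => sin ((2 * (k : ℝ) + c - 1) * θ))]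
  simp

theorem J0_action_eq_of_two_sin_mul_eq {θ n S : ℝ} (hθ : sin θ ≠ 0) (hn : n ≠ 0)
    (hS : 2 * sin θ * S = sin ((n - 1) * θ)) :
    -cos θ * sin (n * θ) / (4 * n * sin θ) - cos (n * θ) / 4
      = (-1/4 - 1/(4 * n)) * cos (n * θ) - (1 / (2 * n)) * S := by
  have hsub : sin ((n - 1) * θ) = sin (n * θ) * cos θ - cos (n * θ) * sin θ := by
    rw [sub_one_mul, sin_sub]
  field_simp
  linear_combination 2 * hS + 2 * hsub

/-- Action of the flat-strip Calderón operator `J₀` on the cosine basis, written as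
an upper-triangular combination of lower order cosines plus diagonal term `λ_n = -1/4 - 1/(4n)`,
separately for even `n = 2p` and odd `n = 2p+1`. -/
theorem J0_upper_triangular (θ : ℝ) (hθ : θ ∈ Set.Ioo 0 Real.pi) :
    (∀ p : ℕ, 1 ≤ p →
      -Real.cos θ * Real.sin ((2 * (p:ℝ)) * θ) / (4 * (2 * (p:ℝ)) * Real.sin θ)
          - Real.cos ((2 * (p:ℝ)) * θ) / 4
        = (-1/4 - 1/(4 * (2 * (p:ℝ)))) * Real.cos ((2 * (p:ℝ)) * θ)
          - (1 / (2 * (2 * (p:ℝ)))) *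
            ∑ k ∈ Finset.range p,
              (1 - (if k = 0 then (1:ℝ) else 0) / 2) * Real.cos (2 * (k:ℝ) * θ)) ∧
    (∀ p : ℕ,
      -Real.cos θ * Real.sin ((2 * (p:ℝ) + 1) * θ) / (4 * (2 * (p:ℝ) + 1) * Real.sin θ)
          - Real.cos ((2 * (p:ℝ) + 1) * θ) / 4
        = (-1/4 - 1/(4 * (2 * (p:ℝ) + 1))) * Real.cos ((2 * (p:ℝ) + 1) * θ)
          - (1 / (2 * (2 * (p:ℝ) + 1))) *
            ∑ k ∈ Finset.range p, Real.cos ((2 * (k:ℝ) + 1) * θ)) := by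
  have hs : sin θ ≠ 0 := (sin_pos_of_pos_of_lt_pi hθ.1 hθ.2).ne'
  refine ⟨fun p hp => J0_action_eq_of_two_sin_mul_eq hs (by positivity) ?_,
    fun p => J0_action_eq_of_two_sin_mul_eq hs (by positivity) ?_⟩
  · have hterm : ∀ k : ℕ, (1 - (if k = 0 then (1:ℝ) else 0) / 2) * cos (2 * (k:ℝ) * θ)
        = cos ((2 * k + 0) * θ) - if k = 0 then 1 / 2 else 0 := by
      intro k
      split_ifs with hk <;> simp [hk]
    have hsplit : ∑ k ∈ range p, (1 - (if k = 0 then (1:ℝ) else 0) / 2) * cos (2 * (k:ℝ) * θ)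
        = ∑ k ∈ range p, cos ((2 * k + 0) * θ) - 1 / 2 := by
      rw [sum_congr rfl fun k _ => hterm k, sum_sub_distrib, sum_ite_eq',
        if_pos (mem_range.2 hp)]
    rw [hsplit, mul_sub, two_mul_sin_mul_sum_range_cos]
    ring_nf
    rw [sin_neg]
    ring
  · rw [two_mul_sin_mul_sum_range_cos]
    ring_nf
    simp
end

section
/- The operator C̃ defined on the cosine basis by C̃[e₀] = 0 and C̃[e_n](θ) = sin(nθ)/(n sin θ) for n ≥ 1 admits the integral representation C̃[φ](θ) = (θ(π-θ)/(π sin θ)) [ (1/θ) ∫₀^θ φ(u) du - (1/(π-θ)) ∫_θ^π φ(u) du ] for each finite linear combination φ of the cosine basis functions e_n(θ) = cos(nθ) and each θ ∈ (0, π). -/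
/-!
On `e_n` with `n ≥ 1` both integrals are elementary, `∫₀^θ cos (n u) du = sin (n θ) / n
= -∫_θ^π cos (n u) du` (as `sin (n π) = 0`), and `θ (π - θ) (1/θ + 1/(π - θ)) = π`; on `e₀` the
bracket is `1 - 1 = 0`. The formula is linear in `φ`, which gives the general case.
-/

open Real Finset intervalIntegral

/-- The integral formula for `C̃[φ](θ)`. -/
noncomputable def integralRepr (φ : ℝ → ℝ) (θ : ℝ) : ℝ :=
  θ * (π - θ) / (π * sin θ) *
    ((1 / θ) * (∫ u in (0 : ℝ)..θ, φ u) - (1 / (π - θ)) * ∫ u in θ..π, φ u)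

theorem integral_cos_const_mul {c : ℝ} (hc : c ≠ 0) (a b : ℝ) :
    ∫ x in a..b, cos (c * x) = (sin (c * b) - sin (c * a)) / c := by
  rw [integral_comp_mul_left (fun x => cos x) hc, integral_cos, smul_eq_mul]
  field_simp

theorem integralRepr_finsetSum {ι : Type*} (s : Finset ι) (c : ι → ℝ) {f : ι → ℝ → ℝ}
    {θ : ℝ} (hf₀ : ∀ i ∈ s, IntervalIntegrable (f i) MeasureTheory.volume 0 θ)
    (hf_pi : ∀ i ∈ s, IntervalIntegrable (f i) MeasureTheory.volume θ π) :
    integralRepr (fun u => ∑ i ∈ s, c i * f i u) θ = ∑ i ∈ s, c i * integralRepr (f i) θ := by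
  have hsum : ∀ a b, (∀ i ∈ s, IntervalIntegrable (f i) MeasureTheory.volume a b) →
      ∫ u in a..b, ∑ i ∈ s, c i * f i u = ∑ i ∈ s, c i * ∫ u in a..b, f i u := by
    intro a b hf
    rw [integral_finsetSum fun i hi => (hf i hi).const_mul (c i)]
    exact sum_congr rfl fun i _ => integral_const_mul _ _
  simp only [integralRepr, hsum 0 θ hf₀, hsum θ π hf_pi, mul_sum, ← sum_sub_distrib]
  exact sum_congr rfl fun i _ => by ring

theorem integralRepr_cos_nat_mul (n : ℕ) {θ : ℝ} (hθ : θ ∈ Set.Ioo 0 π) :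
    integralRepr (fun u => cos (n * u)) θ
      = if n = 0 then 0 else sin (n * θ) / (n * sin θ) := by
  obtain ⟨hθ₀, hθπ⟩ := hθ
  have hπθ : π - θ ≠ 0 := sub_ne_zero.mpr hθπ.ne'
  have hsin : sin θ ≠ 0 := (sin_pos_of_pos_of_lt_pi hθ₀ hθπ).ne'
  rcases eq_or_ne n 0 with rfl | hn
  · simp only [integralRepr, CharP.cast_eq_zero, zero_mul, cos_zero, integral_const,
      smul_eq_mul, mul_one, if_true]
    field_simp
    ring
  · have hn' : (n : ℝ) ≠ 0 := Nat.cast_ne_zero.mpr hn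
    simp only [integralRepr, integral_cos_const_mul hn', mul_zero, sin_zero, sin_nat_mul_pi,
      hn, if_false]
    field_simp
    ring

/-- Integral representation of the operator `C̃` (defined on the cosine basis by
`C̃[e₀] = 0`, `C̃[e_n](θ) = sin(nθ)/(n sin θ)`) on finite linear combinations of cosines. -/
theorem C_integral_representation (N : ℕ) (a : ℕ → ℝ) (θ : ℝ)
    (hθ : θ ∈ Set.Ioo 0 Real.pi) :
    ∑ n ∈ Finset.range (N + 1),
        a n * (if n = 0 then (0:ℝ) else Real.sin (n * θ) / (n * Real.sin θ))
      = (θ * (Real.pi - θ) / (Real.pi * Real.sin θ)) *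
          ((1 / θ) *
              (∫ u in (0:ℝ)..θ, ∑ n ∈ Finset.range (N + 1), a n * Real.cos (n * u))
            - (1 / (Real.pi - θ)) *
              (∫ u in θ..Real.pi, ∑ n ∈ Finset.range (N + 1), a n * Real.cos (n * u))) := by
  have hcos : ∀ n : ℕ, Continuous fun u : ℝ => cos (n * u) := fun n => by fun_prop
  change _ = integralRepr (fun u => ∑ n ∈ range (N + 1), a n * cos (n * u)) θ
  rw [integralRepr_finsetSum _ _ (fun n _ => (hcos n).intervalIntegrable _ _)
    (fun n _ => (hcos n).intervalIntegrable _ _)]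
  exact sum_congr rfl fun n _ => by rw [integralRepr_cos_nat_mul n hθ]
end

section
/- For every n ≥ 0 there exists a function v_n which is a linear combination of e₀, …, e_n with nonzero coefficient of e_n, such that J₀[v_n] = λ_n v_n, where λ₀ = -(ln 2)/4 and λ_n = -1/4 - 1/(4n) for n ≥ 1. Hence each λ_n is an eigenvalue of J₀. -/
open Real Finset

/-- The diagonal values of the upper-triangular operator `J₀`. -/
noncomputable def lamJ (n : ℕ) : ℝ :=
  if n = 0 then -(Real.log 2) / 4 else -1/4 - 1/(4 * (n:ℝ))

/-- Action of `J₀` on the cosine basis function `e_n(θ) = cos(nθ)`: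
`J₀[e₀] = -(ln 2)/4 · e₀`; for `n = 2p`,
`J₀[e_n] = λ_n e_n - (1/(2n)) Σ_{k<p} (1 - δ_{0k}/2) e_{2k}`; for `n = 2p+1`,
`J₀[e_n] = λ_n e_n - (1/(2n)) Σ_{k<p} e_{2k+1}`. -/
noncomputable def J0e (n : ℕ) (θ : ℝ) : ℝ :=
  if n = 0 then -(Real.log 2) / 4
  else if Even n then
    lamJ n * Real.cos (n * θ)
      - (1 / (2 * (n:ℝ))) *
          ∑ k ∈ Finset.range (n / 2),
            (1 - (if k = 0 then (1:ℝ) else 0) / 2) * Real.cos (2 * (k:ℝ) * θ)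
  else
    lamJ n * Real.cos (n * θ)
      - (1 / (2 * (n:ℝ))) *
          ∑ k ∈ Finset.range (n / 2), Real.cos ((2 * (k:ℝ) + 1) * θ)

/-! In the basis `e_k = cos (k θ)`, `J₀` is triangular: `J₀ e_k = λ_k e_k + Σ_{j<k} m_{kj} e_j`.
For a triangular operator whose diagonal entries `λ_j`, `j ≤ n`, are pairwise distinct, an
eigenvector `Σ_{k≤n} c_k e_k` for `λ_n` with `c_n = 1` is found by solving the triangular
system for `c_{n-1}, …, c_0` in turn, dividing by `λ_n - λ_j ≠ 0` at step `j`. -/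

section Triangular

variable {K V : Type*} [Field K] [AddCommGroup V] [Module K V]

noncomputable def triangularEigenCoeff (d : ℕ → K) (M : ℕ → ℕ → K) (n j : ℕ) : K :=
  if n ≤ j then if j = n then 1 else 0
  else (∑ k ∈ (Ico (j + 1) (n + 1)).attach, triangularEigenCoeff d M n k * M k j) / (d n - d j)
termination_by n - j
decreasing_by have := mem_Ico.mp k.2; omega

variable (d : ℕ → K) (M : ℕ → ℕ → K) {n : ℕ}

theorem triangularEigenCoeff_self : triangularEigenCoeff d M n n = 1 := by
  rw [triangularEigenCoeff]; simp

theorem triangularEigenCoeff_of_lt {k : ℕ} (h : n < k) : triangularEigenCoeff d M n k = 0 := by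
  rw [triangularEigenCoeff, if_pos h.le, if_neg h.ne']

theorem triangularEigenCoeff_mul_add_sum (hd : ∀ j < n, d j ≠ d n) {j : ℕ} (hj : j ≤ n) :
    triangularEigenCoeff d M n j * d j
      + ∑ k ∈ Ico (j + 1) (n + 1), triangularEigenCoeff d M n k * M k j
      = d n * triangularEigenCoeff d M n j := by
  rcases hj.lt_or_eq with hj | rfl
  · have hrec : triangularEigenCoeff d M n j * (d n - d j)
        = ∑ k ∈ Ico (j + 1) (n + 1), triangularEigenCoeff d M n k * M k j := by
      rw [triangularEigenCoeff, if_neg hj.not_ge, sum_attach (Ico (j + 1) (n + 1))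
        (fun k ↦ triangularEigenCoeff d M n k * M k j),
        div_mul_cancel₀ _ (sub_ne_zero.mpr (hd j hj).symm)]
    rw [← hrec]; ring
  · simp [mul_comm]

theorem sum_smul_sum_range_smul_comm (c : ℕ → K) (e : ℕ → V) (N : ℕ) :
    ∑ k ∈ range N, c k • ∑ j ∈ range k, M k j • e j
      = ∑ j ∈ range N, (∑ k ∈ Ico (j + 1) N, c k * M k j) • e j := by
  simp only [range_eq_Ico, smul_sum, smul_smul, sum_smul]
  exact (sum_Ico_Ico_comm' 0 N fun j k ↦ (c k * M k j) • e j).symm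

theorem exists_eigenvector_of_triangular (e T : ℕ → V)
    (hT : ∀ k, T k = d k • e k + ∑ j ∈ range k, M k j • e j) (hd : ∀ j < n, d j ≠ d n) :
    ∃ c : ℕ → K, c n = 1 ∧ (∀ k, n < k → c k = 0) ∧
      ∑ k ∈ range (n + 1), c k • T k = d n • ∑ k ∈ range (n + 1), c k • e k := by
  set c := triangularEigenCoeff d M n
  refine ⟨c, triangularEigenCoeff_self d M, fun k ↦ triangularEigenCoeff_of_lt d M, ?_⟩
  calc ∑ k ∈ range (n + 1), c k • T k
      = ∑ j ∈ range (n + 1), (c j * d j + ∑ k ∈ Ico (j + 1) (n + 1), c k * M k j) • e j := by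
        simp only [hT, smul_add, sum_add_distrib, sum_smul_sum_range_smul_comm, add_smul, smul_smul]
    _ = ∑ j ∈ range (n + 1), (d n * c j) • e j := by
        refine sum_congr rfl fun j hj ↦ ?_
        rw [triangularEigenCoeff_mul_add_sum d M hd (Nat.lt_succ_iff.mp (mem_range.mp hj))]
    _ = d n • ∑ k ∈ range (n + 1), c k • e k := by
        simp only [smul_sum, smul_smul]

end Triangular

theorem sum_range_ite_mod_two_eq {M : Type*} [AddCommMonoid M] (f : ℕ → M) (k : ℕ) :
    ∑ j ∈ range k, (if j % 2 = k % 2 then f j else 0) = ∑ i ∈ range (k / 2), f (2 * i + k % 2) := by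
  induction k using Nat.twoStepInduction with
  | zero => simp
  | one => simp
  | more k ih _ =>
    have hk : 2 * (k / 2) + k % 2 = k := Nat.div_add_mod k 2
    rw [sum_range_succ, sum_range_succ, Nat.add_mod_right, ih, if_pos rfl, if_neg (by omega),
      add_zero, Nat.add_div_right k two_pos, sum_range_succ, hk]

noncomputable def J0offDiag (k j : ℕ) : ℝ :=
  if j % 2 = k % 2 then -(1 - (if j = 0 then 1 else 0) / 2) / (2 * k) else 0

theorem J0e_eq (k : ℕ) (θ : ℝ) :
    J0e k θ = lamJ k * cos (k * θ) + ∑ j ∈ range k, J0offDiag k j * cos (j * θ) := by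
  rcases Nat.eq_zero_or_pos k with rfl | hk
  · simp [J0e, lamJ]
  simp only [J0offDiag, ite_mul, zero_mul]
  rw [sum_range_ite_mod_two_eq
    (fun j ↦ -(1 - (if j = 0 then 1 else 0) / 2) / (2 * k) * cos (j * θ)), J0e, if_neg hk.ne']
  rcases Nat.even_or_odd k with hev | hodd
  · rw [if_pos hev, Nat.even_iff.mp hev, mul_sum, sub_eq_add_neg, ← sum_neg_distrib]
    refine congrArg _ (sum_congr rfl fun i _ ↦ ?_)
    simp only [add_zero, Nat.cast_mul, Nat.cast_ofNat, mul_eq_zero, OfNat.ofNat_ne_zero, false_or]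
    ring
  · rw [if_neg (Nat.not_even_iff_odd.mpr hodd), Nat.odd_iff.mp hodd, mul_sum, sub_eq_add_neg,
      ← sum_neg_distrib]
    refine congrArg _ (sum_congr rfl fun i _ ↦ ?_)
    simp only [Nat.add_eq_zero_iff, one_ne_zero, and_false, if_false]
    push_cast
    ring

theorem lamJ_ne_of_lt {j n : ℕ} (h : j < n) : lamJ j ≠ lamJ n := by
  have hn : (0 : ℝ) < n := by exact_mod_cast (Nat.zero_le j).trans_lt h
  rcases Nat.eq_zero_or_pos j with rfl | hj
  · have : Real.log 2 < 1 := by linarith [Real.log_two_lt_d9]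
    have : 0 < 1 / (4 * (n : ℝ)) := by positivity
    simp only [lamJ, if_pos, if_neg h.ne']
    linarith
  · have hj' : (0 : ℝ) < j := by exact_mod_cast hj
    have : 1 / (4 * (n : ℝ)) < 1 / (4 * j) := by gcongr
    simp only [lamJ, if_neg hj.ne', if_neg (hj.trans h).ne']
    linarith

/-- For every `n` there is an eigenvector `v_n` of `J₀` with eigenvalue `λ_n`, given by a
linear combination of `e₀, …, e_n` with nonzero coefficient of `e_n`. -/
theorem J0_eigenvalues (n : ℕ) :
    ∃ c : ℕ → ℝ, c n ≠ 0 ∧ (∀ k : ℕ, n < k → c k = 0) ∧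
      ∀ θ : ℝ,
        ∑ k ∈ Finset.range (n + 1), c k * J0e k θ
          = lamJ n * ∑ k ∈ Finset.range (n + 1), c k * Real.cos (k * θ) := by
  have hJ (k : ℕ) : J0e k = lamJ k • (fun θ ↦ cos (k * θ))
      + ∑ j ∈ range k, J0offDiag k j • fun θ ↦ cos (j * θ) := funext fun θ ↦ by
    simp only [J0e_eq, Pi.add_apply, Finset.sum_apply, Pi.smul_apply, smul_eq_mul]
  obtain ⟨c, hcn, hc, heig⟩ := exists_eigenvector_of_triangular lamJ J0offDiag _ _ hJ
    fun j hj ↦ lamJ_ne_of_lt hj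
  refine ⟨c, hcn ▸ one_ne_zero, hc, fun θ ↦ ?_⟩
  simpa using congrFun heig θ
end

section
/- Let λ = λ_x + i λ_y be a complex number with λ ∉ {-(ln 2)/4} ∪ {-1/4 - 1/(4n) : n ≥ 1}. Suppose a sequence (f_n)_{n≥1} satisfies the recursion (-1/4 - 1/(4n)) f_n - (1/2) Σ_{k=1}^∞ f_{n+2k}/(n+2k) = λ f_n for all n ≥ 1, where the series converges absolutely. Then the sequence f_n is determined up to scalar multiples on even and odd indices separately; i.e., the solution space of the recursion restricted to even indices (resp. odd indices) is at most one-dimensional. -/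
open Complex

lemma zero_chain (A B h : ℕ → ℂ) (hA : ∀ j, A j ≠ 0)
    (rec : ∀ j, A j * h j = B j * h (j+1)) (s : ℕ) (hbase : h s = 0)
    (hBup : ∀ j, s ≤ j → B j ≠ 0) : ∀ j, h j = 0 := by
  have up : ∀ d, h (s + d) = 0 := by
    intro d; induction d with
    | zero => exact hbase
    | succ d ih =>
      have hr := rec (s + d)
      rw [ih, mul_zero] at hr
      have hB := hBup (s+d) (Nat.le_add_right _ _)
      have h0 : h (s + d + 1) = 0 := (mul_eq_zero.mp hr.symm).resolve_left hB
      rw [show s + (d+1) = s + d + 1 from by omega]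
      exact h0
  have down : ∀ d, h (s - d) = 0 := by
    intro d; induction d with
    | zero => exact hbase
    | succ d ih =>
      rcases le_or_gt s d with hd | hd
      · rw [show s - (d+1) = s - d from by omega]; exact ih
      · have hr := rec (s - (d+1))
        rw [show s - (d+1) + 1 = s - d from by omega, ih, mul_zero] at hr
        exact (mul_eq_zero.mp hr).resolve_left (hA _)
  intro j
  rcases le_or_gt s j with hj | hj
  · have := up (j - s); rwa [Nat.add_sub_cancel' hj] at this
  · have := down (s - j); rwa [Nat.sub_sub_self hj.le] at this

lemma chain_dep (A B F G : ℕ → ℂ) (hA : ∀ j, A j ≠ 0)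
    (hBinj : ∀ i j, B i = 0 → B j = 0 → i = j)
    (hF : ∀ j, A j * F j = B j * F (j+1))
    (hG : ∀ j, A j * G j = B j * G (j+1)) :
    ∃ a b : ℂ, (a ≠ 0 ∨ b ≠ 0) ∧ ∀ j, a * F j + b * G j = 0 := by
  obtain ⟨s, hBup⟩ : ∃ s, ∀ j, s ≤ j → B j ≠ 0 := by
    by_cases hB : ∃ j, B j = 0
    · obtain ⟨j0, hj0⟩ := hB
      exact ⟨j0+1, fun j hj hBj => by have := hBinj j j0 hBj hj0; omega⟩
    · exact ⟨0, fun j _ hBj => hB ⟨j, hBj⟩⟩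
  by_cases hFs : F s = 0
  · exact ⟨1, 0, Or.inl one_ne_zero, fun j => by
      simpa using zero_chain A B F hA hF s hFs hBup j⟩
  · refine ⟨G s, -F s, Or.inr (neg_ne_zero.mpr hFs), fun j => ?_⟩
    have hH : ∀ j, A j * (G s * F j + (-F s) * G j)
        = B j * (G s * F (j+1) + (-F s) * G (j+1)) := fun j => by
      linear_combination G s * hF j - F s * hG j
    exact zero_chain A B (fun j => G s * F j + (-F s) * G j) hA hH s (by ring) hBup j

lemma step (lam : ℂ) (f : ℕ → ℂ)
    (hfs : ∀ n : ℕ, 1 ≤ n →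
      Summable (fun k : ℕ => ‖f (n + 2 * (k + 1)) / ((n + 2 * (k + 1) : ℕ) : ℂ)‖))
    (hf : ∀ n : ℕ, 1 ≤ n →
      (-1/4 - 1/(4 * (n:ℂ))) * f n
          - (1/2) * ∑' k : ℕ, f (n + 2 * (k + 1)) / ((n + 2 * (k + 1) : ℕ) : ℂ)
        = lam * f n)
    (n : ℕ) (hn : 1 ≤ n) :
    (-1/4 - 1/(4*(n:ℂ)) - lam) * f n
      = (-1/4 - lam + 1/(4*((n:ℂ)+2))) * f (n+2) := by
  have hs : Summable (fun k : ℕ => f (n + 2*(k+1)) / ((n + 2*(k+1):ℕ):ℂ)) :=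
    (hfs n hn).of_norm
  have e0 : ∀ k : ℕ, f (n + 2*(k+1+1)) / ((n + 2*(k+1+1):ℕ):ℂ)
      = f (n+2+2*(k+1)) / ((n+2+2*(k+1):ℕ):ℂ) := fun k => by
    rw [show n + 2*(k+1+1) = n+2+2*(k+1) from by omega]
  have hshift : (∑' k:ℕ, f (n+2*(k+1)) / ((n+2*(k+1):ℕ):ℂ))
      = f (n+2) / ((n+2:ℕ):ℂ)
        + ∑' k:ℕ, f (n+2+2*(k+1)) / ((n+2+2*(k+1):ℕ):ℂ) := by
    rw [hs.tsum_eq_zero_add, tsum_congr e0]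
  have h1 := hf n hn
  have h2 := hf (n+2) (by omega)
  rw [hshift] at h1
  push_cast at h1 h2 ⊢
  have hq : (1:ℂ)/(4*((n:ℂ)+2)) = (1/4) * (1/((n:ℂ)+2)) := by
    rw [one_div, mul_inv]; ring
  rw [hq] at h2 ⊢
  linear_combination h1 - h2

/-- For `λ` outside the diagonal spectrum `{-(ln 2)/4} ∪ {-1/4 - 1/(4n)}`, the solution
space of the recursion `(-1/4 - 1/(4n)) f_n - (1/2) Σ_{k≥1} f_{n+2k}/(n+2k) = λ f_n`
(with absolutely convergent series) is at most one-dimensional on even indices, and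
at most one-dimensional on odd indices: any two solutions are linearly dependent there. -/
theorem recursion_solution_space_dim (lam : ℂ)
    (hlam0 : lam ≠ (-(Real.log 2) / 4 : ℝ))
    (hlamn : ∀ n : ℕ, 1 ≤ n → lam ≠ -1/4 - 1/(4 * (n:ℂ)))
    (f g : ℕ → ℂ)
    (hfs : ∀ n : ℕ, 1 ≤ n →
      Summable (fun k : ℕ => ‖f (n + 2 * (k + 1)) / ((n + 2 * (k + 1) : ℕ) : ℂ)‖))
    (hf : ∀ n : ℕ, 1 ≤ n →
      (-1/4 - 1/(4 * (n:ℂ))) * f n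
          - (1/2) * ∑' k : ℕ, f (n + 2 * (k + 1)) / ((n + 2 * (k + 1) : ℕ) : ℂ)
        = lam * f n)
    (hgs : ∀ n : ℕ, 1 ≤ n →
      Summable (fun k : ℕ => ‖g (n + 2 * (k + 1)) / ((n + 2 * (k + 1) : ℕ) : ℂ)‖))
    (hg : ∀ n : ℕ, 1 ≤ n →
      (-1/4 - 1/(4 * (n:ℂ))) * g n
          - (1/2) * ∑' k : ℕ, g (n + 2 * (k + 1)) / ((n + 2 * (k + 1) : ℕ) : ℂ)
        = lam * g n) :
    (∃ a b : ℂ, (a ≠ 0 ∨ b ≠ 0) ∧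
      ∀ m : ℕ, 1 ≤ m → a * f (2 * m) + b * g (2 * m) = 0) ∧
    (∃ a b : ℂ, (a ≠ 0 ∨ b ≠ 0) ∧
      ∀ m : ℕ, a * f (2 * m + 1) + b * g (2 * m + 1) = 0) := by
  have key : ∀ n0 : ℕ, 1 ≤ n0 → ∃ a b : ℂ, (a ≠ 0 ∨ b ≠ 0) ∧
      ∀ j : ℕ, a * f (n0 + 2 * j) + b * g (n0 + 2 * j) = 0 := by
    intro n0 hn0
    have hA : ∀ j : ℕ, (-1/4 - 1/(4*((n0 + 2*j : ℕ):ℂ)) - lam) ≠ 0 := by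
      intro j h
      exact hlamn (n0 + 2*j) (by omega) (by linear_combination -h)
    have hcne : ∀ j : ℕ, ((n0 + 2*j : ℕ):ℂ) + 2 ≠ 0 := by
      intro j
      have h2 : ((n0 + 2*j + 2 : ℕ):ℂ) ≠ 0 := Nat.cast_ne_zero.mpr (by omega)
      push_cast at h2 ⊢
      intro h; apply h2; linear_combination h
    have hBinj : ∀ i j : ℕ,
        (-1/4 - lam + 1/(4*(((n0 + 2*i : ℕ):ℂ) + 2))) = 0 →
        (-1/4 - lam + 1/(4*(((n0 + 2*j : ℕ):ℂ) + 2))) = 0 → i = j := by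
      intro i j hi hj
      have e : 1/(4*(((n0 + 2*i : ℕ):ℂ) + 2)) = 1/(4*(((n0 + 2*j : ℕ):ℂ) + 2)) := by
        linear_combination hi - hj
      have hci := hcne i
      have hcj := hcne j
      field_simp at e
      have : (n0 + 2*j + 2 : ℕ) = n0 + 2*i + 2 := by exact_mod_cast e
      omega
    have hF : ∀ j : ℕ, (-1/4 - 1/(4*((n0 + 2*j : ℕ):ℂ)) - lam) * f (n0 + 2*j)
        = (-1/4 - lam + 1/(4*(((n0 + 2*j : ℕ):ℂ) + 2))) * f (n0 + 2*(j+1)) := by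
      intro j
      have := step lam f hfs hf (n0 + 2*j) (by omega)
      rw [show n0 + 2*(j+1) = n0 + 2*j + 2 from by omega]
      exact this
    have hG : ∀ j : ℕ, (-1/4 - 1/(4*((n0 + 2*j : ℕ):ℂ)) - lam) * g (n0 + 2*j)
        = (-1/4 - lam + 1/(4*(((n0 + 2*j : ℕ):ℂ) + 2))) * g (n0 + 2*(j+1)) := by
      intro j
      have := step lam g hgs hg (n0 + 2*j) (by omega)
      rw [show n0 + 2*(j+1) = n0 + 2*j + 2 from by omega]
      exact this
    exact chain_dep _ _ _ _ hA hBinj hF hG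
  constructor
  · obtain ⟨a, b, hab, h⟩ := key 2 (by omega)
    refine ⟨a, b, hab, fun m hm => ?_⟩
    have := h (m - 1)
    rwa [show 2 + 2*(m-1) = 2*m from by omega] at this
  · obtain ⟨a, b, hab, h⟩ := key 1 (by omega)
    refine ⟨a, b, hab, fun m => ?_⟩
    have := h m
    rwa [show 1 + 2*m = 2*m + 1 from by omega] at this
end
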